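/- Let u : ℝ² → ℝ² be continuously differentiable with div u = 0 everywhere, and let S : ℝ² → ℝ² be twice continuously differentiable with compact support. Then ∫_{ℝ²} ((u·∇)S)(x) · ΔS(x) dx = - ∫_{ℝ²} Σ_{k,ℓ=1}^{2} (∂_ℓ u_k)(x) (∂_k S(x) · ∂_ℓ S(x)) dx, where ∂_k S = (∂_k S₁, ∂_k S₂) and · denotes the Euclidean inner product in ℝ². -/

import Mathlib

open MeasureTheory

/-- Partial derivative in direction `i` of a scalar function on `ℝ²`. -/
noncomputable def pd (i : Fin 2) (f : (Fin 2 → ℝ) → ℝ) (x : Fin 2 → ℝ) : ℝ :=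
  fderiv ℝ f x (Pi.single i 1)

/-- Laplacian of a scalar function on `ℝ²`. -/
noncomputable def lap (f : (Fin 2 → ℝ) → ℝ) (x : Fin 2 → ℝ) : ℝ :=
  pd 0 (pd 0 f) x + pd 1 (pd 1 f) x

/-! For a scalar `f`, integrate `((u·∇)f) ∂ₗ∂ₗf` by parts in the variable `xₗ`. Differentiating
the convective term produces `Σₖ ∂ₗuₖ ∂ₖf ∂ₗf`, which is the right-hand side, plus `((u·∇)g) g`
for `g = ∂ₗf` (by symmetry of second derivatives). The latter is `(u·∇)(g²/2)`, so integrating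
by parts once more gives `-½ ∫ (div u) g² = 0`. Summing over the components of `S` gives the
theorem. -/

noncomputable def convDeriv (u : (Fin 2 → ℝ) → (Fin 2 → ℝ)) (f : (Fin 2 → ℝ) → ℝ)
    (x : Fin 2 → ℝ) : ℝ :=
  ∑ k, u x k * pd k f x

noncomputable def divergence (u : (Fin 2 → ℝ) → (Fin 2 → ℝ)) (x : Fin 2 → ℝ) : ℝ :=
  ∑ k, pd k (fun y => u y k) x

theorem integrable_mul_of_hasCompactSupport {X : Type*} [TopologicalSpace X] [MeasurableSpace X]
    [OpensMeasurableSpace X] {μ : Measure X} [IsFiniteMeasureOnCompacts μ] {f g : X → ℝ}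
    (hf : Continuous f) (hg : Continuous g) (hgc : HasCompactSupport g) :
    Integrable (fun x => f x * g x) μ :=
  (hf.mul hg).integrable_of_hasCompactSupport hgc.mul_left

theorem integral_mul_fderiv_eq_neg_fderiv_mul_of_hasCompactSupport {E : Type*}
    [NormedAddCommGroup E] [NormedSpace ℝ E] [FiniteDimensional ℝ E] [MeasurableSpace E]
    [BorelSpace E] {μ : Measure E} [μ.IsAddHaarMeasure] {f g : E → ℝ}
    (hf : ContDiff ℝ 1 f) (hg : ContDiff ℝ 1 g) (hgc : HasCompactSupport g) (v : E) :
    ∫ x, f x * fderiv ℝ g x v ∂μ = -∫ x, fderiv ℝ f x v * g x ∂μ :=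
  have hf' : Continuous (fderiv ℝ f · v) :=
    (hf.continuous_fderiv one_ne_zero).clm_apply continuous_const
  have hg' : Continuous (fderiv ℝ g · v) :=
    (hg.continuous_fderiv one_ne_zero).clm_apply continuous_const
  integral_mul_fderiv_eq_neg_fderiv_mul_of_integrable
    (integrable_mul_of_hasCompactSupport hf' hg.continuous hgc)
    (integrable_mul_of_hasCompactSupport hf.continuous hg' (hgc.fderiv_apply ℝ v))
    (integrable_mul_of_hasCompactSupport hf.continuous hg.continuous hgc)
    (fun x _ => hf.differentiable one_ne_zero x) (fun x _ => hg.differentiable one_ne_zero x)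

section PartialDerivatives

variable {f g : (Fin 2 → ℝ) → ℝ}

theorem contDiff_pd {m n : WithTop ℕ∞} (hf : ContDiff ℝ n f) (hmn : m + 1 ≤ n) (k : Fin 2) :
    ContDiff ℝ m (pd k f) :=
  (hf.fderiv_right hmn).clm_apply contDiff_const

theorem continuous_pd (hf : ContDiff ℝ 1 f) (k : Fin 2) : Continuous (pd k f) :=
  (contDiff_pd (m := 0) hf (by norm_num) k).continuous

theorem hasCompactSupport_pd (hf : HasCompactSupport f) (k : Fin 2) :
    HasCompactSupport (pd k f) :=
  hf.fderiv_apply ℝ (Pi.single k 1)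

theorem pd_mul {x : Fin 2 → ℝ} (hf : DifferentiableAt ℝ f x) (hg : DifferentiableAt ℝ g x)
    (k : Fin 2) : pd k (fun y => f y * g y) x = pd k f x * g x + f x * pd k g x := by
  simp only [pd, fderiv_fun_mul hf hg, add_apply, smul_apply, smul_eq_mul]
  ring

theorem pd_pd_eq_fderiv_fderiv (hf : ContDiff ℝ 2 f) (k l : Fin 2) (x : Fin 2 → ℝ) :
    pd k (pd l f) x = fderiv ℝ (fderiv ℝ f) x (Pi.single k 1) (Pi.single l 1) := by
  have hdf : HasFDerivAt (fderiv ℝ f) (fderiv ℝ (fderiv ℝ f) x) x :=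
    ((hf.fderiv_right (m := 1) (by norm_num)).differentiable one_ne_zero x).hasFDerivAt
  change fderiv ℝ (fun y => fderiv ℝ f y (Pi.single l 1)) x (Pi.single k 1) = _
  rw [(hdf.clm_apply (hasFDerivAt_const (Pi.single l 1) x)).fderiv]
  simp only [ContinuousLinearMap.comp_zero, zero_add, ContinuousLinearMap.flip_apply]

theorem pd_comm (hf : ContDiff ℝ 2 f) (k l : Fin 2) (x : Fin 2 → ℝ) :
    pd k (pd l f) x = pd l (pd k f) x := by
  rw [pd_pd_eq_fderiv_fderiv hf, pd_pd_eq_fderiv_fderiv hf]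
  exact (hf.contDiffAt.isSymmSndFDerivAt (by simp)).eq _ _

theorem integrable_mul_pd {φ : (Fin 2 → ℝ) → ℝ} (hφ : Continuous φ) (hf : ContDiff ℝ 1 f)
    (hfc : HasCompactSupport f) (k : Fin 2) : Integrable fun x => φ x * pd k f x :=
  integrable_mul_of_hasCompactSupport hφ (continuous_pd hf k) (hasCompactSupport_pd hfc k)

theorem integrable_pd_mul_pd_mul_pd {w : (Fin 2 → ℝ) → ℝ} (hw : ContDiff ℝ 1 w)
    (hf : ContDiff ℝ 1 f) (hfc : HasCompactSupport f) (k l : Fin 2) :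
    Integrable fun x => pd l w x * pd k f x * pd l f x :=
  integrable_mul_pd ((continuous_pd hw l).mul (continuous_pd hf k)) hf hfc l

theorem hasCompactSupport_lap (hf : HasCompactSupport f) : HasCompactSupport (lap f) :=
  (hasCompactSupport_pd (hasCompactSupport_pd hf 0) 0).add
    (hasCompactSupport_pd (hasCompactSupport_pd hf 1) 1)

theorem continuous_lap (hf : ContDiff ℝ 2 f) : Continuous (lap f) :=
  (continuous_pd (contDiff_pd hf (by norm_num) 0) 0).add
    (continuous_pd (contDiff_pd hf (by norm_num) 1) 1)

end PartialDerivatives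

section Convective

variable {u : (Fin 2 → ℝ) → (Fin 2 → ℝ)} {f g : (Fin 2 → ℝ) → ℝ}

theorem contDiff_convDeriv {m n : WithTop ℕ∞} (hu : ContDiff ℝ m u) (hf : ContDiff ℝ n f)
    (hmn : m + 1 ≤ n) : ContDiff ℝ m (convDeriv u f) :=
  ContDiff.sum fun k _ => (contDiff_pi.mp hu k).mul (contDiff_pd hf hmn k)

theorem continuous_convDeriv (hu : Continuous u) (hf : ContDiff ℝ 1 f) :
    Continuous (convDeriv u f) :=
  continuous_finsetSum _ fun k _ => (continuous_apply k |>.comp hu).mul (continuous_pd hf k)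

theorem convDeriv_mul {x : Fin 2 → ℝ} (hf : DifferentiableAt ℝ f x)
    (hg : DifferentiableAt ℝ g x) :
    convDeriv u (fun y => f y * g y) x = convDeriv u f x * g x + f x * convDeriv u g x := by
  simp only [convDeriv, pd_mul hf hg, Finset.sum_mul, Finset.mul_sum, ← Finset.sum_add_distrib]
  exact Finset.sum_congr rfl fun k _ => by ring

theorem pd_convDeriv (hu : ContDiff ℝ 1 u) (hf : ContDiff ℝ 2 f) (l : Fin 2) (x : Fin 2 → ℝ) :
    pd l (convDeriv u f) x
      = ∑ k, pd l (fun y => u y k) x * pd k f x + convDeriv u (pd l f) x := by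
  have hdiff : ∀ k, DifferentiableAt ℝ (fun y => u y k * pd k f y) x := fun k =>
    ((contDiff_pi.mp hu k).mul (contDiff_pd hf (by norm_num) k)).differentiable one_ne_zero x
  have hsum : pd l (convDeriv u f) x = ∑ k, pd l (fun y => u y k * pd k f y) x := by
    change fderiv ℝ (fun y => ∑ k, u y k * pd k f y) x (Pi.single l 1) = _
    rw [fderiv_fun_sum fun k _ => hdiff k, sum_apply]
    rfl
  simp only [hsum, pd_mul ((contDiff_pi.mp hu _).differentiable one_ne_zero x)
    ((contDiff_pd hf (by norm_num) _).differentiable one_ne_zero x), convDeriv,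
    ← Finset.sum_add_distrib]
  exact Finset.sum_congr rfl fun k _ => by rw [pd_comm hf l k]

theorem integral_convDeriv_eq_neg_integral_divergence_mul (hu : ContDiff ℝ 1 u)
    (hg : ContDiff ℝ 1 g) (hgc : HasCompactSupport g) :
    ∫ x, convDeriv u g x = -∫ x, divergence u x * g x := by
  have huk : ∀ k, ContDiff ℝ 1 fun y => u y k := contDiff_pi.mp hu
  calc ∫ x, convDeriv u g x = ∑ k, ∫ x, u x k * pd k g x :=
        integral_finsetSum _ fun k _ => integrable_mul_pd (huk k).continuous hg hgc k
    _ = ∑ k, -∫ x, pd k (fun y => u y k) x * g x := Finset.sum_congr rfl fun k _ =>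
        integral_mul_fderiv_eq_neg_fderiv_mul_of_hasCompactSupport (huk k) hg hgc _
    _ = -∫ x, divergence u x * g x := by
        rw [Finset.sum_neg_distrib, ← integral_finsetSum _ fun k _ =>
          integrable_mul_of_hasCompactSupport (continuous_pd (huk k) k) hg.continuous hgc]
        simp only [divergence, Finset.sum_mul]

theorem integral_convDeriv_mul_self_eq_zero (hu : ContDiff ℝ 1 u)
    (hdiv : ∀ x, divergence u x = 0) (hg : ContDiff ℝ 1 g) (hgc : HasCompactSupport g) :
    ∫ x, convDeriv u g x * g x = 0 := by
  have hg' := hg.differentiable one_ne_zero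
  have hsq : ∀ x, convDeriv u g x * g x = 2⁻¹ * convDeriv u (fun y => g y * g y) x := by
    intro x
    rw [convDeriv_mul (hg' x) (hg' x)]
    ring
  simp only [hsq, integral_const_mul,
    integral_convDeriv_eq_neg_integral_divergence_mul hu (hg.mul hg) hgc.mul_left, hdiv, zero_mul, integral_zero, neg_zero, mul_zero]

theorem integral_convDeriv_mul_pd_pd (hu : ContDiff ℝ 1 u) (hdiv : ∀ x, divergence u x = 0)
    (hf : ContDiff ℝ 2 f) (hfc : HasCompactSupport f) (l : Fin 2) :
    ∫ x, convDeriv u f x * pd l (pd l f) x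
      = -∫ x, ∑ k, pd l (fun y => u y k) x * pd k f x * pd l f x := by
  have hf1 : ContDiff ℝ 1 f := hf.of_le (by norm_num)
  have hg : ContDiff ℝ 1 (pd l f) := contDiff_pd hf (by norm_num) l
  have hgc : HasCompactSupport (pd l f) := hasCompactSupport_pd hfc l
  have hA : Integrable fun x => ∑ k, pd l (fun y => u y k) x * pd k f x * pd l f x :=
    integrable_finsetSum _ fun k _ =>
      integrable_pd_mul_pd_mul_pd (contDiff_pi.mp hu k) hf1 hfc k l
  have hB : Integrable fun x => convDeriv u (pd l f) x * pd l f x :=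
    integrable_mul_pd (continuous_convDeriv hu.continuous hg) hf1 hfc l
  calc ∫ x, convDeriv u f x * pd l (pd l f) x
      = -∫ x, pd l (convDeriv u f) x * pd l f x :=
        integral_mul_fderiv_eq_neg_fderiv_mul_of_hasCompactSupport
          (contDiff_convDeriv hu hf (by norm_num)) hg hgc _
    _ = -∫ x, (∑ k, pd l (fun y => u y k) x * pd k f x * pd l f x
          + convDeriv u (pd l f) x * pd l f x) := by
        simp only [pd_convDeriv hu hf, add_mul, Finset.sum_mul]
    _ = -∫ x, ∑ k, pd l (fun y => u y k) x * pd k f x * pd l f x := by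
        rw [integral_add hA hB, integral_convDeriv_mul_self_eq_zero hu hdiv hg hgc, add_zero]

theorem integral_convDeriv_mul_lap (hu : ContDiff ℝ 1 u) (hdiv : ∀ x, divergence u x = 0)
    (hf : ContDiff ℝ 2 f) (hfc : HasCompactSupport f) :
    ∫ x, convDeriv u f x * lap f x
      = -∫ x, ∑ k, ∑ l, pd l (fun y => u y k) x * pd k f x * pd l f x := by
  have hf1 : ContDiff ℝ 1 f := hf.of_le (by norm_num)
  have hT : ∀ l, Integrable fun x => convDeriv u f x * pd l (pd l f) x := fun l =>
    integrable_mul_pd (continuous_convDeriv hu.continuous hf1) (contDiff_pd hf (by norm_num) l)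
      (hasCompactSupport_pd hfc l) l
  have hA : ∀ l, Integrable fun x => ∑ k, pd l (fun y => u y k) x * pd k f x * pd l f x :=
    fun l => integrable_finsetSum _ fun k _ =>
      integrable_pd_mul_pd_mul_pd (contDiff_pi.mp hu k) hf1 hfc k l
  calc ∫ x, convDeriv u f x * lap f x = ∑ l, ∫ x, convDeriv u f x * pd l (pd l f) x := by
        rw [← integral_finsetSum _ fun l _ => hT l]
        simp only [lap, Fin.sum_univ_two, mul_add]
    _ = ∑ l, -∫ x, ∑ k, pd l (fun y => u y k) x * pd k f x * pd l f x :=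
        Finset.sum_congr rfl fun l _ => integral_convDeriv_mul_pd_pd hu hdiv hf hfc l
    _ = -∫ x, ∑ k, ∑ l, pd l (fun y => u y k) x * pd k f x * pd l f x := by
        rw [Finset.sum_neg_distrib, ← integral_finsetSum _ fun l _ => hA l]
        congr 2 with x
        exact Finset.sum_comm

end Convective

/-- `∫ ((u·∇)S)·ΔS = -∫ Σ_{k,ℓ} ∂_ℓu_k (∂_kS · ∂_ℓS)` for divergence-free
`C¹` `u` and compactly supported `C²` `S`. -/
theorem convective_against_laplacian
    (u S : (Fin 2 → ℝ) → (Fin 2 → ℝ))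
    (hu : ContDiff ℝ 1 u)
    (hdiv : ∀ x, pd 0 (fun y => u y 0) x + pd 1 (fun y => u y 1) x = 0)
    (hS : ContDiff ℝ 2 S) (hSc : HasCompactSupport S) :
    (∫ x : Fin 2 → ℝ,
        ∑ i, (∑ k, u x k * pd k (fun y => S y i) x) * lap (fun y => S y i) x)
    = - ∫ x : Fin 2 → ℝ,
        ∑ k, ∑ l, pd l (fun y => u y k) x
          * (∑ i, pd k (fun y => S y i) x * pd l (fun y => S y i) x) := by
  have hdiv' : ∀ x, divergence u x = 0 := fun x => by
    simpa only [divergence, Fin.sum_univ_two] using hdiv x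
  have hSi : ∀ i, ContDiff ℝ 2 fun y => S y i := contDiff_pi.mp hS
  have hSic : ∀ i, HasCompactSupport fun y => S y i := fun i =>
    hSc.comp_left (g := fun v : Fin 2 → ℝ => v i) rfl
  have hRHS : ∀ i, Integrable fun x =>
      ∑ k, ∑ l, pd l (fun y => u y k) x * pd k (fun y => S y i) x * pd l (fun y => S y i) x :=
    fun i => integrable_finsetSum _ fun k _ => integrable_finsetSum _ fun l _ =>
      integrable_pd_mul_pd_mul_pd (contDiff_pi.mp hu k) ((hSi i).of_le (by norm_num)) (hSic i) k l
  calc (∫ x, ∑ i, (∑ k, u x k * pd k (fun y => S y i) x) * lap (fun y => S y i) x)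
      = ∑ i, ∫ x, convDeriv u (fun y => S y i) x * lap (fun y => S y i) x :=
        integral_finsetSum _ fun i _ => integrable_mul_of_hasCompactSupport
          (continuous_convDeriv hu.continuous ((hSi i).of_le (by norm_num)))
          (continuous_lap (hSi i)) (hasCompactSupport_lap (hSic i))
    _ = ∑ i, -∫ x, ∑ k, ∑ l,
          pd l (fun y => u y k) x * pd k (fun y => S y i) x * pd l (fun y => S y i) x :=
        Finset.sum_congr rfl fun i _ => integral_convDeriv_mul_lap hu hdiv' (hSi i) (hSic i)
    _ = _ := by
        rw [Finset.sum_neg_distrib, ← integral_finsetSum _ fun i _ => hRHS i]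
        simp only [Finset.mul_sum, mul_assoc]
        congr 2 with x
        rw [Finset.sum_comm]
        exact Finset.sum_congr rfl fun k _ => Finset.sum_comm
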